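/- arXiv:1707.03994 — 7 statements merged into one kernel-verified Lean document; each statement's English description precedes it below -/
import Mathlib

section
/- Let T be an invertible bounded linear operator on a separable Banach space X. If T is hypercyclic (i.e., admits a vector x whose orbit {T^n x : n ≥ 0} is dense in X), then T⁻¹ is also hypercyclic. -/
/-!
A dense orbit in a space without isolated points makes `T` topologically transitive: for all
nonempty open `U` and `V`, some `Tⁿ U` meets `V`. Read backwards, this says the same of `T⁻¹`,
because `T⁻ⁿ (Tⁿ u) = u`. By the Baire category theorem, in a second countable Baire
space the points whose orbit under a continuous transitive map meets every basic open set form a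
dense `G_δ`, so `T⁻¹` has a dense orbit.
-/

open Set Function TopologicalSpace Filter Topology

section

variable {X : Type*} [TopologicalSpace X]

def TopologicallyTransitive (f : X → X) : Prop :=
  ∀ ⦃U V : Set X⦄, IsOpen U → U.Nonempty → IsOpen V → V.Nonempty →
    ∃ n, (U ∩ f^[n] ⁻¹' V).Nonempty

theorem Dense.range_iterate_iterate [T1Space X] [∀ x : X, NeBot (𝓝[≠] x)] {f : X → X} {x : X}
    (hx : Dense (range fun n => f^[n] x)) (m : ℕ) :
    Dense (range fun n => f^[n] (f^[m] x)) := by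
  refine (hx.sdiff_finite ((finite_Iio m).image fun n => f^[n] x)).mono ?_
  rintro _ ⟨⟨k, rfl⟩, hk⟩
  have hmk : m ≤ k := not_lt.mp fun hkm => hk ⟨k, hkm, rfl⟩
  exact ⟨k - m, by simp only [← iterate_add_apply, Nat.sub_add_cancel hmk]⟩

theorem topologicallyTransitive_of_dense_range_iterate [T1Space X] [∀ x : X, NeBot (𝓝[≠] x)]
    {f : X → X} {x : X} (hx : Dense (range fun n => f^[n] x)) : TopologicallyTransitive f := by
  intro U V hU hUne hV hVne
  obtain ⟨_, hmU, m, rfl⟩ := hx.inter_open_nonempty U hU hUne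
  obtain ⟨_, hkV, k, rfl⟩ := (hx.range_iterate_iterate m).inter_open_nonempty V hV hVne
  exact ⟨k, f^[m] x, hmU, hkV⟩

theorem TopologicallyTransitive.of_leftInverse {f g : X → X} (hf : TopologicallyTransitive f)
    (hgf : LeftInverse g f) : TopologicallyTransitive g := by
  intro U V hU hUne hV hVne
  obtain ⟨n, v, hvV, hvU⟩ := hf hV hVne hU hUne
  exact ⟨n, f^[n] v, hvU, by rwa [mem_preimage, hgf.iterate n v]⟩

theorem TopologicallyTransitive.dense_iUnion_preimage_iterate {f : X → X}
    (hf : TopologicallyTransitive f) {V : Set X} (hV : IsOpen V) (hVne : V.Nonempty) :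
    Dense (⋃ n, f^[n] ⁻¹' V) := by
  rw [dense_iff_inter_open]
  intro U hU hUne
  obtain ⟨n, hn⟩ := hf hU hUne hV hVne
  exact hn.mono (inter_subset_inter_right U (subset_iUnion (fun n => f^[n] ⁻¹' V) n))

/-- Birkhoff's transitivity theorem. -/
theorem TopologicallyTransitive.exists_dense_range_iterate [BaireSpace X]
    [SecondCountableTopology X] [Nonempty X] {f : X → X} (hf : TopologicallyTransitive f)
    (hcont : Continuous f) : ∃ x, Dense (range fun n => f^[n] x) := by
  have hB := isBasis_countableBasis X
  have hGδ : Dense (⋂ V ∈ countableBasis X, ⋃ n, f^[n] ⁻¹' V) :=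
    dense_biInter_of_isOpen
      (fun V hV => isOpen_iUnion fun n => (hB.isOpen hV).preimage (hcont.iterate n))
      (countable_countableBasis X)
      (fun V hV => hf.dense_iUnion_preimage_iterate (hB.isOpen hV)
        (nonempty_iff_ne_empty.mpr (ne_of_mem_of_not_mem hV (empty_notMem_countableBasis X))))
  obtain ⟨x, hx⟩ := hGδ.nonempty
  refine ⟨x, hB.dense_iff.mpr fun V hV _ => ?_⟩
  obtain ⟨n, hn⟩ := mem_iUnion.mp (mem_iInter₂.mp hx V hV)
  exact ⟨f^[n] x, hn, n, rfl⟩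

end

theorem inverse_of_hypercyclic_is_hypercyclic
    {X : Type*} [NormedAddCommGroup X] [NormedSpace ℝ X] [CompleteSpace X]
    [TopologicalSpace.SeparableSpace X]
    (T : X ≃L[ℝ] X)
    (hT : ∃ x : X, Dense (Set.range fun n : ℕ => ((T : X →L[ℝ] X) ^ n) x)) :
    ∃ x : X, Dense (Set.range fun n : ℕ => ((T.symm : X →L[ℝ] X) ^ n) x) := by
  obtain ⟨x₀, hx₀⟩ := hT
  simp only [FunLike.coe_pow_eq_iterate, ContinuousLinearEquiv.coe_coe] at hx₀ ⊢
  rcases subsingleton_or_nontrivial X with _ | _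
  · exact ⟨x₀, by rw [(range_nonempty _).eq_univ]; exact dense_univ⟩
  have : Nonempty X := ⟨x₀⟩
  exact ((topologicallyTransitive_of_dense_range_iterate hx₀).of_leftInverse
    T.symm_apply_apply).exists_dense_range_iterate T.symm.continuous
end

section
/- Let T be an invertible bounded linear operator on a Banach space X. If T is chaotic (hypercyclic with a dense set of periodic points), then T⁻¹ is chaotic. -/
/-!
A dense orbit of `T` makes `T` topologically transitive, because its tail `T^m '' orbit` is still
dense. Transitivity passes to the inverse (swap the two open sets), and Birkhoff's transitivity
theorem — the Baire category theorem applied to the sets `⋃ n, T⁻ⁿ(V)` with `V` running over a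
countable basis — turns it back into a dense orbit. The periodic points of `T` and `T⁻¹` coincide.
-/

open Set Function

namespace Function

variable {X : Type*} [TopologicalSpace X]

def IsTopologicallyTransitive (f : X → X) : Prop :=
  ∀ U V : Set X, IsOpen U → U.Nonempty → IsOpen V → V.Nonempty →
    ∃ n : ℕ, (U ∩ f^[n] ⁻¹' V).Nonempty

theorem denseRange_iterate {f : X → X} (hf : DenseRange f) (hc : Continuous f) :
    ∀ n : ℕ, DenseRange f^[n]
  | 0 => denseRange_id
  | n + 1 => by
    rw [iterate_succ']
    exact hf.comp (denseRange_iterate hf hc n) hc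

theorem isTopologicallyTransitive_of_dense_orbit {f : X → X} (hf : DenseRange f)
    (hc : Continuous f) {x : X} (hx : Dense (range fun n : ℕ => f^[n] x)) :
    IsTopologicallyTransitive f := by
  intro U V hU hUne hV hVne
  obtain ⟨_, ⟨m, rfl⟩, hmU⟩ := hx.exists_mem_open hU hUne
  have htail : Dense (f^[m] '' range fun n : ℕ => f^[n] x) :=
    (denseRange_iterate hf hc m).dense_image (hc.iterate m) hx
  obtain ⟨_, ⟨_, ⟨n, rfl⟩, rfl⟩, hnV⟩ := htail.exists_mem_open hV hVne
  refine ⟨n, f^[m] x, hmU, ?_⟩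
  rwa [mem_preimage, ← iterate_add_apply, add_comm, iterate_add_apply]

theorem IsTopologicallyTransitive.of_leftInverse {f g : X → X}
    (hf : IsTopologicallyTransitive f) (hgf : LeftInverse g f) :
    IsTopologicallyTransitive g := by
  intro U V hU hUne hV hVne
  obtain ⟨n, v, hvV, hvU⟩ := hf V U hV hVne hU hUne
  exact ⟨n, f^[n] v, hvU, by rwa [mem_preimage, hgf.iterate n]⟩

theorem IsTopologicallyTransitive.exists_dense_orbit [BaireSpace X]
    [SecondCountableTopology X] [Nonempty X] {f : X → X} (hf : IsTopologicallyTransitive f)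
    (hc : Continuous f) : ∃ x : X, Dense (range fun n : ℕ => f^[n] x) := by
  obtain ⟨b, hbc, hbe, hb⟩ := TopologicalSpace.exists_countable_basis X
  have hvisit : ∀ V ∈ b, Dense (⋃ n : ℕ, f^[n] ⁻¹' V) := fun V hVb => by
    have hVne : V.Nonempty := nonempty_iff_ne_empty.2 fun h => hbe (h ▸ hVb)
    refine dense_iff_inter_open.2 fun U hU hUne => ?_
    obtain ⟨n, u, huU, huV⟩ := hf U V hU hUne (hb.isOpen hVb) hVne
    exact ⟨u, huU, mem_iUnion.2 ⟨n, huV⟩⟩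
  have hG : Dense (⋂ V ∈ b, ⋃ n : ℕ, f^[n] ⁻¹' V) :=
    dense_biInter_of_isOpen (fun V hVb => isOpen_iUnion fun n =>
      (hb.isOpen hVb).preimage (hc.iterate n)) hbc hvisit
  obtain ⟨x, hx⟩ := hG.nonempty
  refine ⟨x, hb.dense_iff.2 fun V hVb _ => ?_⟩
  obtain ⟨n, hn⟩ := mem_iUnion.1 (mem_iInter₂.1 hx V hVb)
  exact ⟨f^[n] x, hn, n, rfl⟩

end Function

theorem Function.periodicPts_subset_of_leftInverse {X : Type*} {f g : X → X}
    (hgf : LeftInverse g f) : periodicPts f ⊆ periodicPts g := by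
  rintro x ⟨n, hn, hx⟩
  exact ⟨n, hn, by rw [IsPeriodicPt, IsFixedPt, ← hx.eq, hgf.iterate n, hx.eq]⟩

theorem inverse_of_chaotic_is_chaotic
    {X : Type*} [NormedAddCommGroup X] [NormedSpace ℝ X] [CompleteSpace X]
    [TopologicalSpace.SeparableSpace X]
    (T : X ≃L[ℝ] X)
    (hHC : ∃ x : X, Dense (Set.range fun n : ℕ => ((T : X →L[ℝ] X) ^ n) x))
    (hPer : Dense {x : X | ∃ n : ℕ, 1 ≤ n ∧ ((T : X →L[ℝ] X) ^ n) x = x}) :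
    (∃ x : X, Dense (Set.range fun n : ℕ => ((T.symm : X →L[ℝ] X) ^ n) x)) ∧
      Dense {x : X | ∃ n : ℕ, 1 ≤ n ∧ ((T.symm : X →L[ℝ] X) ^ n) x = x} := by
  simp only [FunLike.coe_pow_eq_iterate, ContinuousLinearEquiv.coe_coe] at hHC hPer ⊢
  have hinv : LeftInverse T.symm T := T.symm_apply_apply
  obtain ⟨x, hx⟩ := hHC
  have htrans : IsTopologicallyTransitive T :=
    isTopologicallyTransitive_of_dense_orbit T.surjective.denseRange T.continuous hx
  exact ⟨(htrans.of_leftInverse hinv).exists_dense_orbit T.symm.continuous,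
    hPer.mono (periodicPts_subset_of_leftInverse hinv)⟩
end

section
/- Let X be a Banach sequence space over ℤ in which the unit vectors (e_n) form a basis, with the norm |||x||| = sup_{m,n≥0} ‖∑_{−m≤k≤n} x_k e_k‖. Define X̂ = {x ∈ 𝕂^ℤ : |||x||| < ∞}. Then X̂, equipped with |||·|||, is a Banach space, it is a Banach sequence space (coordinate functionals are continuous), and X is a closed subspace of X̂. -/
noncomputable def partialSum {X : Type*} [NormedAddCommGroup X] [NormedSpace ℝ X]
    (e : ℤ → X) (x : ℤ → ℝ) (mn : ℕ × ℕ) : X :=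
  ∑ k ∈ Finset.Icc (-(mn.1 : ℤ)) (mn.2 : ℤ), x k • e k

noncomputable def tnorm {X : Type*} [NormedAddCommGroup X] [NormedSpace ℝ X]
    (e : ℤ → X) (x : ℤ → ℝ) : ℝ :=
  ⨆ mn : ℕ × ℕ, ‖partialSum e x mn‖

/-- `X̂ = {x ∈ 𝕂^ℤ : |||x||| < ∞}`. -/
def Xhat {X : Type*} [NormedAddCommGroup X] [NormedSpace ℝ X]
    (e : ℤ → X) : Set (ℤ → ℝ) :=
  {x | BddAbove (Set.range fun mn : ℕ × ℕ => ‖partialSum e x mn‖)}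

/-!
A coordinate `x k` is controlled by `|||x|||`, because `x k • e k` is the difference of two
partial sums (or, for `k = 0`, a single one). Hence a `|||·|||`-Cauchy sequence converges
coordinatewise, each partial sum converges along it, and the uniform bounds on the partial sums
of `u i - u j` pass to the limit.

For `z ∈ X` the partial sums converge to `z`, so they are bounded and `‖z‖ ≤ |||z|||`. A sequence
of `X` converging in `|||·|||` is therefore Cauchy in `X`, and its limit in `X` has the right
coordinates by continuity of the coordinate functionals.
-/

open Filter Topology

section

variable {X : Type*} [NormedAddCommGroup X] [NormedSpace ℝ X] {e : ℤ → X}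

section PartialSum

variable (e)

lemma partialSum_add (x y : ℤ → ℝ) (mn : ℕ × ℕ) :
    partialSum e (x + y) mn = partialSum e x mn + partialSum e y mn := by
  simp [partialSum, add_smul, Finset.sum_add_distrib]

lemma partialSum_sub (x y : ℤ → ℝ) (mn : ℕ × ℕ) :
    partialSum e (x - y) mn = partialSum e x mn - partialSum e y mn := by
  simp [partialSum, sub_smul, Finset.sum_sub_distrib]

lemma partialSum_smul (c : ℝ) (x : ℤ → ℝ) (mn : ℕ × ℕ) :
    partialSum e (c • x) mn = c • partialSum e x mn := by
  simp [partialSum, Finset.smul_sum, smul_smul]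

lemma partialSum_zero_zero (x : ℤ → ℝ) : partialSum e x (0, 0) = x 0 • e 0 := by
  simp [partialSum]

lemma partialSum_sub_partialSum_of_le (x : ℤ → ℝ) {mn mn' : ℕ × ℕ} (h : mn ≤ mn') :
    partialSum e x mn' - partialSum e x mn =
      ∑ k ∈ Finset.Icc (-(mn'.1 : ℤ)) mn'.2 \ Finset.Icc (-(mn.1 : ℤ)) mn.2, x k • e k := by
  refine (Finset.sum_sdiff_eq_sub (Finset.Icc_subset_Icc ?_ ?_)).symm
  · exact neg_le_neg (Nat.cast_le.2 h.1)
  · exact Nat.cast_le.2 h.2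

lemma smul_eq_partialSum_sub_partialSum (x : ℤ → ℝ) {k : ℤ} (hk : k ≠ 0) :
    ∃ mn mn' : ℕ × ℕ, x k • e k = partialSum e x mn' - partialSum e x mn := by
  -- `(0, k - 1) ≤ (0, k)` if `k > 0`, and `(-k - 1, 0) ≤ (-k, 0)` if `k < 0`
  refine ⟨((-k - 1).toNat, (k - 1).toNat), ((-k).toNat, k.toNat), ?_⟩
  rw [partialSum_sub_partialSum_of_le e x (by rw [Prod.mk_le_mk]; omega)]
  have hsingle : Finset.Icc (-((-k).toNat : ℤ)) k.toNat \
      Finset.Icc (-((-k - 1).toNat : ℤ)) (k - 1).toNat = {k} := by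
    ext j
    simp only [Int.ofNat_toNat, Int.pred_toNat, Finset.mem_sdiff, Finset.mem_Icc, le_sup_iff,
      not_and, not_le, Finset.mem_singleton]
    omega
  rw [hsingle, Finset.sum_singleton]

lemma norm_partialSum_sup_sub_le (x : ℤ → ℝ) (mn P : ℕ × ℕ) :
    ‖partialSum e x (mn ⊔ P) - partialSum e x mn‖ ≤
      ∑ k ∈ Finset.Icc (-(P.1 : ℤ)) P.2, ‖x k • e k‖ := by
  rw [partialSum_sub_partialSum_of_le e x le_sup_left]
  refine (norm_sum_le _ _).trans
    (Finset.sum_le_sum_of_subset_of_nonneg (fun j hj => ?_) fun _ _ _ => norm_nonneg _)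
  simp only [Finset.mem_sdiff, Finset.mem_Icc, Prod.fst_sup, Prod.snd_sup, Nat.cast_max] at hj ⊢
  omega

lemma tendsto_partialSum {ι : Type*} {l : Filter ι} {u : ι → ℤ → ℝ} {y : ℤ → ℝ}
    (hy : ∀ k, Tendsto (fun i => u i k) l (𝓝 (y k))) (mn : ℕ × ℕ) :
    Tendsto (fun i => partialSum e (u i) mn) l (𝓝 (partialSum e y mn)) :=
  tendsto_finsetSum _ fun k _ => (hy k).smul_const (e k)

end PartialSum

section Tnorm

variable {x y z : ℤ → ℝ}

lemma norm_partialSum_le_tnorm (hx : x ∈ Xhat e) (mn : ℕ × ℕ) :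
    ‖partialSum e x mn‖ ≤ tnorm e x :=
  le_ciSup hx mn

lemma tnorm_nonneg (hx : x ∈ Xhat e) : 0 ≤ tnorm e x :=
  (norm_nonneg _).trans (norm_partialSum_le_tnorm hx (0, 0))

lemma mem_Xhat_of_forall_le {c : ℝ} (h : ∀ mn, ‖partialSum e x mn‖ ≤ c) : x ∈ Xhat e :=
  ⟨c, by rintro _ ⟨mn, rfl⟩; exact h mn⟩

lemma tnorm_le_of_forall_le {c : ℝ} (h : ∀ mn, ‖partialSum e x mn‖ ≤ c) : tnorm e x ≤ c :=
  ciSup_le h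

lemma norm_partialSum_add_le (hx : x ∈ Xhat e) (hy : y ∈ Xhat e) (mn : ℕ × ℕ) :
    ‖partialSum e (x + y) mn‖ ≤ tnorm e x + tnorm e y := by
  rw [partialSum_add]
  exact (norm_add_le _ _).trans
    (add_le_add (norm_partialSum_le_tnorm hx mn) (norm_partialSum_le_tnorm hy mn))

lemma add_mem_Xhat (hx : x ∈ Xhat e) (hy : y ∈ Xhat e) : x + y ∈ Xhat e :=
  mem_Xhat_of_forall_le (norm_partialSum_add_le hx hy)

lemma tnorm_add_le (hx : x ∈ Xhat e) (hy : y ∈ Xhat e) :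
    tnorm e (x + y) ≤ tnorm e x + tnorm e y :=
  tnorm_le_of_forall_le (norm_partialSum_add_le hx hy)

lemma smul_mem_Xhat (c : ℝ) (hx : x ∈ Xhat e) : c • x ∈ Xhat e := by
  refine mem_Xhat_of_forall_le (c := |c| * tnorm e x) fun mn => ?_
  rw [partialSum_smul, norm_smul, Real.norm_eq_abs]
  exact mul_le_mul_of_nonneg_left (norm_partialSum_le_tnorm hx mn) (abs_nonneg c)

lemma tnorm_smul (c : ℝ) (x : ℤ → ℝ) : tnorm e (c • x) = |c| * tnorm e x := by
  simp only [tnorm, partialSum_smul, norm_smul, Real.norm_eq_abs]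
  exact (Real.mul_iSup_of_nonneg (abs_nonneg c) _).symm

lemma sub_mem_Xhat (hx : x ∈ Xhat e) (hy : y ∈ Xhat e) : x - y ∈ Xhat e := by
  simpa [sub_eq_add_neg] using add_mem_Xhat hx (smul_mem_Xhat (-1) hy)

lemma tnorm_sub_comm (x y : ℤ → ℝ) : tnorm e (x - y) = tnorm e (y - x) := by
  rw [← neg_sub, ← neg_one_smul ℝ (y - x), tnorm_smul, abs_neg, abs_one, one_mul]

lemma tnorm_sub_le (hx : x ∈ Xhat e) (hy : y ∈ Xhat e) (hz : z ∈ Xhat e) :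
    tnorm e (x - z) ≤ tnorm e (x - y) + tnorm e (y - z) := by
  simpa using tnorm_add_le (sub_mem_Xhat hx hy) (sub_mem_Xhat hy hz)

lemma mem_Xhat_of_tendsto {z : X} (h : Tendsto (partialSum e x) atTop (𝓝 z)) :
    x ∈ Xhat e := by
  obtain ⟨P, hP⟩ := eventually_atTop.1 <| h.norm.eventually (gt_mem_nhds (lt_add_one ‖z‖))
  refine mem_Xhat_of_forall_le (c := ‖z‖ + 1 + ∑ k ∈ Finset.Icc (-(P.1 : ℤ)) P.2, ‖x k • e k‖)
    fun mn => ?_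
  calc ‖partialSum e x mn‖
      ≤ ‖partialSum e x (mn ⊔ P)‖ + ‖partialSum e x (mn ⊔ P) - partialSum e x mn‖ :=
        norm_le_norm_add_norm_sub _ _
    _ ≤ ‖z‖ + 1 + ∑ k ∈ Finset.Icc (-(P.1 : ℤ)) P.2, ‖x k • e k‖ :=
        add_le_add (hP _ le_sup_right).le (norm_partialSum_sup_sub_le e x mn P)

lemma norm_le_tnorm_of_tendsto {z : X} (h : Tendsto (partialSum e x) atTop (𝓝 z)) :
    ‖z‖ ≤ tnorm e x :=
  le_of_tendsto h.norm (Eventually.of_forall (norm_partialSum_le_tnorm (mem_Xhat_of_tendsto h)))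

end Tnorm

section Coordinates

variable {x : ℤ → ℝ}

lemma norm_smul_le_two_mul_tnorm (hx : x ∈ Xhat e) (k : ℤ) :
    ‖x k • e k‖ ≤ 2 * tnorm e x := by
  by_cases hk : k = 0
  · subst hk
    rw [← partialSum_zero_zero]
    linarith [norm_partialSum_le_tnorm hx (0, 0), tnorm_nonneg hx]
  · obtain ⟨mn, mn', h⟩ := smul_eq_partialSum_sub_partialSum e x hk
    rw [h, two_mul]
    exact (norm_sub_le _ _).trans
      (add_le_add (norm_partialSum_le_tnorm hx mn') (norm_partialSum_le_tnorm hx mn))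

lemma abs_apply_le_mul_tnorm {k : ℤ} (hek : e k ≠ 0) (hx : x ∈ Xhat e) :
    |x k| ≤ 2 / ‖e k‖ * tnorm e x := by
  rw [div_mul_eq_mul_div, le_div_iff₀ (norm_pos_iff.2 hek), ← Real.norm_eq_abs, ← norm_smul]
  exact norm_smul_le_two_mul_tnorm hx k

lemma eq_zero_of_tnorm_eq_zero (he : ∀ k, e k ≠ 0) (hx : x ∈ Xhat e) (h : tnorm e x = 0) :
    x = 0 := by
  funext k
  simpa [h] using abs_apply_le_mul_tnorm (he k) hx

lemma tendsto_apply_of_tendsto_tnorm {ι : Type*} {l : Filter ι} {u : ι → ℤ → ℝ} {k : ℤ}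
    (hek : e k ≠ 0) (hu : ∀ i, u i - x ∈ Xhat e)
    (h : Tendsto (fun i => tnorm e (u i - x)) l (𝓝 0)) :
    Tendsto (fun i => u i k) l (𝓝 (x k)) := by
  rw [tendsto_iff_dist_tendsto_zero]
  refine squeeze_zero (fun _ => dist_nonneg) (fun i => ?_) (by simpa using h.const_mul (2 / ‖e k‖))
  exact abs_apply_le_mul_tnorm hek (hu i)

end Coordinates

section Completeness

variable {u : ℕ → ℤ → ℝ}

lemma cauchySeq_apply {k : ℤ} (hek : e k ≠ 0) (hu : ∀ i, u i ∈ Xhat e)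
    (hc : ∀ ε : ℝ, 0 < ε → ∃ N : ℕ, ∀ i j : ℕ, N ≤ i → N ≤ j → tnorm e (u i - u j) < ε) :
    CauchySeq fun i => u i k := by
  have hC : 0 < 2 / ‖e k‖ := div_pos two_pos (norm_pos_iff.2 hek)
  refine Metric.cauchySeq_iff.2 fun ε hε => ?_
  obtain ⟨N, hN⟩ := hc (ε / (2 / ‖e k‖)) (div_pos hε hC)
  refine ⟨N, fun i hi j hj => ?_⟩
  calc dist (u i k) (u j k) = |(u i - u j) k| := rfl
    _ ≤ 2 / ‖e k‖ * tnorm e (u i - u j) := abs_apply_le_mul_tnorm hek (sub_mem_Xhat (hu i) (hu j))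
    _ < 2 / ‖e k‖ * (ε / (2 / ‖e k‖)) := mul_lt_mul_of_pos_left (hN i j hi hj) hC
    _ = ε := mul_div_cancel₀ ε hC.ne'

lemma norm_partialSum_sub_limit_le {y : ℤ → ℝ} (hu : ∀ i, u i ∈ Xhat e)
    (hy : ∀ k, Tendsto (fun i => u i k) atTop (𝓝 (y k))) {ε : ℝ} {N : ℕ}
    (hN : ∀ i j : ℕ, N ≤ i → N ≤ j → tnorm e (u i - u j) < ε) {i : ℕ} (hi : N ≤ i)
    (mn : ℕ × ℕ) : ‖partialSum e (u i - y) mn‖ ≤ ε := by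
  have hlim : Tendsto (fun j => ‖partialSum e (u i - u j) mn‖) atTop
      (𝓝 ‖partialSum e (u i - y) mn‖) := by
    simp only [partialSum_sub]
    exact (tendsto_const_nhds.sub (tendsto_partialSum e hy mn)).norm
  refine le_of_tendsto hlim ?_
  filter_upwards [eventually_ge_atTop N] with j hj
  exact (norm_partialSum_le_tnorm (sub_mem_Xhat (hu i) (hu j)) mn).trans (hN i j hi hj).le

lemma exists_tendsto_tnorm_of_cauchy (he : ∀ k, e k ≠ 0) (hu : ∀ i, u i ∈ Xhat e)
    (hc : ∀ ε : ℝ, 0 < ε → ∃ N : ℕ, ∀ i j : ℕ, N ≤ i → N ≤ j → tnorm e (u i - u j) < ε) :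
    ∃ y ∈ Xhat e, Tendsto (fun i => tnorm e (u i - y)) atTop (𝓝 0) := by
  choose y hy using fun k => cauchySeq_tendsto_of_complete (cauchySeq_apply (he k) hu hc)
  have hyX : y ∈ Xhat e := by
    obtain ⟨N, hN⟩ := hc 1 one_pos
    have hdiff := mem_Xhat_of_forall_le (norm_partialSum_sub_limit_le hu hy hN le_rfl)
    simpa using sub_mem_Xhat (hu N) hdiff
  refine ⟨y, hyX, Metric.tendsto_atTop.2 fun ε hε => ?_⟩
  obtain ⟨N, hN⟩ := hc (ε / 2) (half_pos hε)
  refine ⟨N, fun i hi => ?_⟩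
  have hle := tnorm_le_of_forall_le (norm_partialSum_sub_limit_le hu hy hN hi)
  rw [Real.dist_eq, sub_zero, abs_of_nonneg (tnorm_nonneg (sub_mem_Xhat (hu i) hyX))]
  linarith

end Completeness

section Embedding

variable {coe : X →ₗ[ℝ] (ℤ → ℝ)}
  (hbasis : ∀ z : X, Tendsto (fun mn => partialSum e (coe z) mn) atTop (𝓝 z))
include hbasis

lemma coe_mem_Xhat (z : X) : coe z ∈ Xhat e :=
  mem_Xhat_of_tendsto (hbasis z)

lemma cauchySeq_of_tendsto_tnorm {u : ℕ → X} {y : ℤ → ℝ} (hy : y ∈ Xhat e)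
    (hlim : Tendsto (fun i => tnorm e (coe (u i) - y)) atTop (𝓝 0)) : CauchySeq u := by
  refine Metric.cauchySeq_iff.2 fun ε hε => ?_
  obtain ⟨N, hN⟩ := Metric.tendsto_atTop.1 hlim (ε / 2) (half_pos hε)
  have hsmall : ∀ i, N ≤ i → tnorm e (coe (u i) - y) < ε / 2 := fun i hi => by
    simpa [abs_of_nonneg (tnorm_nonneg (sub_mem_Xhat (coe_mem_Xhat hbasis (u i)) hy))]
      using hN i hi
  refine ⟨N, fun i hi j hj => ?_⟩
  calc dist (u i) (u j) ≤ tnorm e (coe (u i) - coe (u j)) := by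
        simpa [dist_eq_norm] using norm_le_tnorm_of_tendsto (hbasis (u i - u j))
    _ ≤ tnorm e (coe (u i) - y) + tnorm e (y - coe (u j)) :=
        tnorm_sub_le (coe_mem_Xhat hbasis _) hy (coe_mem_Xhat hbasis _)
    _ < ε := by rw [tnorm_sub_comm y]; linarith [hsmall i hi, hsmall j hj]

lemma exists_coe_eq_of_tendsto_tnorm [CompleteSpace X] (hcont : ∀ k, Continuous fun z => coe z k)
    (he : ∀ k, e k ≠ 0) {u : ℕ → X} {y : ℤ → ℝ} (hy : y ∈ Xhat e)
    (hlim : Tendsto (fun i => tnorm e (coe (u i) - y)) atTop (𝓝 0)) : ∃ z : X, coe z = y := by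
  obtain ⟨z, hz⟩ := cauchySeq_tendsto_of_complete (cauchySeq_of_tendsto_tnorm hbasis hy hlim)
  refine ⟨z, funext fun k => tendsto_nhds_unique (((hcont k).tendsto z).comp hz) ?_⟩
  exact tendsto_apply_of_tendsto_tnorm (he k)
    (fun i => sub_mem_Xhat (coe_mem_Xhat hbasis (u i)) hy) hlim

end Embedding

end

theorem Xhat_is_Banach_sequence_space_and_X_closed_general
    {X : Type*} [NormedAddCommGroup X] [NormedSpace ℝ X] [CompleteSpace X]
    (coe : X →ₗ[ℝ] (ℤ → ℝ))
    (hcont : ∀ k : ℤ, Continuous fun x : X => coe x k)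
    (e : ℤ → X) (he : ∀ n k : ℤ, coe (e n) k = if k = n then (1 : ℝ) else 0)
    (hbasis : ∀ x : X,
      Filter.Tendsto (fun mn : ℕ × ℕ => partialSum e (coe x) mn) Filter.atTop (nhds x)) :
    -- `|||·|||` is a norm on `X̂`
    ((∀ x ∈ Xhat e, ∀ y ∈ Xhat e, x + y ∈ Xhat e ∧
        tnorm e (x + y) ≤ tnorm e x + tnorm e y) ∧
     (∀ (c : ℝ), ∀ x ∈ Xhat e, c • x ∈ Xhat e ∧ tnorm e (c • x) = |c| * tnorm e x) ∧
     (∀ x ∈ Xhat e, 0 ≤ tnorm e x) ∧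
     (∀ x ∈ Xhat e, tnorm e x = 0 → x = 0)) ∧
    -- `X̂` is complete for `|||·|||`
    (∀ u : ℕ → (ℤ → ℝ), (∀ i, u i ∈ Xhat e) →
      (∀ ε : ℝ, 0 < ε → ∃ N : ℕ, ∀ i j : ℕ, N ≤ i → N ≤ j → tnorm e (u i - u j) < ε) →
      ∃ y ∈ Xhat e, Filter.Tendsto (fun i => tnorm e (u i - y)) Filter.atTop (nhds 0)) ∧
    -- the coordinate functionals on `X̂` are continuous
    (∀ k : ℤ, ∃ C : ℝ, 0 < C ∧ ∀ x ∈ Xhat e, |x k| ≤ C * tnorm e x) ∧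
    -- `X` is a closed subspace of `X̂`
    ((∀ z : X, coe z ∈ Xhat e) ∧
     (∀ (u : ℕ → X), ∀ y ∈ Xhat e,
        Filter.Tendsto (fun i => tnorm e (coe (u i) - y)) Filter.atTop (nhds 0) →
        ∃ z : X, coe z = y)) := by
  have he0 : ∀ k, e k ≠ 0 := fun k hk => by simpa [hk] using he k k
  refine ⟨⟨fun x hx y hy => ⟨add_mem_Xhat hx hy, tnorm_add_le hx hy⟩,
      fun c x hx => ⟨smul_mem_Xhat c hx, tnorm_smul c x⟩,
      fun x hx => tnorm_nonneg hx,
      fun x hx => eq_zero_of_tnorm_eq_zero he0 hx⟩,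
    fun u hu hc => exists_tendsto_tnorm_of_cauchy he0 hu hc,
    fun k => ⟨2 / ‖e k‖, div_pos two_pos (norm_pos_iff.2 (he0 k)),
      fun x hx => abs_apply_le_mul_tnorm (he0 k) hx⟩,
    coe_mem_Xhat hbasis,
    fun u y hy hlim => exists_coe_eq_of_tendsto_tnorm hbasis hcont he0 hy hlim⟩

theorem Xhat_is_Banach_sequence_space_and_X_closed
    {X : Type*} [NormedAddCommGroup X] [NormedSpace ℝ X] [CompleteSpace X]
    (coe : X →ₗ[ℝ] (ℤ → ℝ)) (hinj : Function.Injective coe)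
    (hcont : ∀ k : ℤ, Continuous fun x : X => coe x k)
    (e : ℤ → X) (he : ∀ n k : ℤ, coe (e n) k = if k = n then (1 : ℝ) else 0)
    (hbasis : ∀ x : X,
      Filter.Tendsto (fun mn : ℕ × ℕ => partialSum e (coe x) mn) Filter.atTop (nhds x)) :
    -- `|||·|||` is a norm on `X̂`
    ((∀ x ∈ Xhat e, ∀ y ∈ Xhat e, x + y ∈ Xhat e ∧
        tnorm e (x + y) ≤ tnorm e x + tnorm e y) ∧
     (∀ (c : ℝ), ∀ x ∈ Xhat e, c • x ∈ Xhat e ∧ tnorm e (c • x) = |c| * tnorm e x) ∧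
     (∀ x ∈ Xhat e, 0 ≤ tnorm e x) ∧
     (∀ x ∈ Xhat e, tnorm e x = 0 → x = 0)) ∧
    -- `X̂` is complete for `|||·|||`
    (∀ u : ℕ → (ℤ → ℝ), (∀ i, u i ∈ Xhat e) →
      (∀ ε : ℝ, 0 < ε → ∃ N : ℕ, ∀ i j : ℕ, N ≤ i → N ≤ j → tnorm e (u i - u j) < ε) →
      ∃ y ∈ Xhat e, Filter.Tendsto (fun i => tnorm e (u i - y)) Filter.atTop (nhds 0)) ∧
    -- the coordinate functionals on `X̂` are continuous
    (∀ k : ℤ, ∃ C : ℝ, 0 < C ∧ ∀ x ∈ Xhat e, |x k| ≤ C * tnorm e x) ∧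
    -- `X` is a closed subspace of `X̂`
    ((∀ z : X, coe z ∈ Xhat e) ∧
     (∀ (u : ℕ → X), ∀ y ∈ Xhat e,
        Filter.Tendsto (fun i => tnorm e (coe (u i) - y)) Filter.atTop (nhds 0) →
        ∃ z : X, coe z = y)) :=
  Xhat_is_Banach_sequence_space_and_X_closed_general coe hcont e he hbasis
end

section
/- Let Y be a Banach space, X a closed subspace of Y, and T a bounded operator on Y. Let 𝒜 = ∪_{δ∈D} ∩_{μ∈M} 𝒜_{δ,μ} be an upper Furstenberg family. If T is 𝒜-hypercyclic for X (there is y' ∈ Y such that for every open U ⊆ Y with U ∩ X ≠ ∅, the set {n : T^n y' ∈ U} belongs to 𝒜), then for every open V ⊆ Y with V ∩ X ≠ ∅ there exists δ ∈ D such that for every open U ⊆ Y with U ∩ X ≠ ∅ there exists y ∈ U with {n ≥ 0 : T^n y ∈ V} ∈ 𝒜_δ, where 𝒜_δ = ∩_{μ∈M} 𝒜_{δ,μ}. -/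
/-!
Let `y'` be the `𝒜`-hypercyclic vector. Its return set to `V` lies in `𝒜`, so by (ii) all its
shifts lie in a single `𝒜_δ`, with `δ` depending on `V` only. Given `U`, the return set of `y'` to
`U` lies in `𝒜 ∌ ∅`, so some `T^{n₀} y'` lies in `U`, and the return set of `T^{n₀} y'` to `V` is
the shift by `n₀` of that of `y'`.
-/

theorem ContinuousLinearMap.setOf_pow_apply_pow_apply_mem {R E : Type*} [Semiring R]
    [TopologicalSpace E] [AddCommMonoid E] [Module R E] (T : E →L[R] E) (y : E) (V : Set E)
    (m : ℕ) : {n : ℕ | (T ^ n) ((T ^ m) y) ∈ V} = {k : ℕ | k + m ∈ {n : ℕ | (T ^ n) y ∈ V}} := by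
  ext k
  simp only [Set.mem_ofPred_eq, pow_add]
  rfl

theorem Ahypercyclic_for_subspace_Birkhoff_necessity_general
    {Y : Type*} [NormedAddCommGroup Y] [NormedSpace ℝ Y]
    (X : Subspace ℝ Y)
    (T : Y →L[ℝ] Y)
    {D M : Type*}
    (𝓐 : D → M → Set (Set ℕ))
    -- 𝒜 = ∪_δ ∩_μ 𝒜_{δ,μ} is a Furstenberg family not containing ∅
    (hempty : ¬ ∃ δ, ∀ μ, (∅ : Set ℕ) ∈ 𝓐 δ μ)
    -- (ii)
    (hii : ∀ A : Set ℕ, (∃ δ, ∀ μ, A ∈ 𝓐 δ μ) →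
      ∃ δ, ∀ n : ℕ, ∀ μ, {k : ℕ | k + n ∈ A} ∈ 𝓐 δ μ)
    -- T is 𝒜-hypercyclic for X
    (y' : Y)
    (hy' : ∀ U : Set Y, IsOpen U → (U ∩ X).Nonempty →
      ∃ δ, ∀ μ, {n : ℕ | (T ^ n) y' ∈ U} ∈ 𝓐 δ μ) :
    ∀ V : Set Y, IsOpen V → (V ∩ X).Nonempty →
      ∃ δ : D, ∀ U : Set Y, IsOpen U → (U ∩ X).Nonempty →
        ∃ y ∈ U, ∀ μ : M, {n : ℕ | (T ^ n) y ∈ V} ∈ 𝓐 δ μ := by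
  intro V hV hVX
  obtain ⟨δ, hδ⟩ := hii _ (hy' V hV hVX)
  refine ⟨δ, fun U hU hUX => ?_⟩
  obtain ⟨n₀, hn₀⟩ : {n : ℕ | (T ^ n) y' ∈ U}.Nonempty :=
    Set.nonempty_iff_ne_empty.2 fun hU_empty => hempty (hU_empty ▸ hy' U hU hUX)
  refine ⟨(T ^ n₀) y', hn₀, fun μ => ?_⟩
  rw [T.setOf_pow_apply_pow_apply_mem]
  exact hδ n₀ μ

theorem Ahypercyclic_for_subspace_Birkhoff_necessity
    {Y : Type*} [NormedAddCommGroup Y] [NormedSpace ℝ Y] [CompleteSpace Y]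
    (X : Subspace ℝ Y) (hX : IsClosed (X : Set Y))
    (T : Y →L[ℝ] Y)
    {D M : Type*} [Countable M]
    (𝓐 : D → M → Set (Set ℕ))
    -- 𝒜 = ∪_δ ∩_μ 𝒜_{δ,μ} is a Furstenberg family not containing ∅
    (hup : ∀ A B : Set ℕ, (∃ δ, ∀ μ, A ∈ 𝓐 δ μ) → A ⊆ B → (∃ δ, ∀ μ, B ∈ 𝓐 δ μ))
    (hempty : ¬ ∃ δ, ∀ μ, (∅ : Set ℕ) ∈ 𝓐 δ μ)
    -- (i)
    (hi : ∀ (δ : D) (μ : M), ∀ A ∈ 𝓐 δ μ, ∃ F : Finset ℕ,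
      ∀ B : Set ℕ, A ∩ (F : Set ℕ) ⊆ B → B ∈ 𝓐 δ μ)
    -- (ii)
    (hii : ∀ A : Set ℕ, (∃ δ, ∀ μ, A ∈ 𝓐 δ μ) →
      ∃ δ, ∀ n : ℕ, ∀ μ, {k : ℕ | k + n ∈ A} ∈ 𝓐 δ μ)
    -- T is 𝒜-hypercyclic for X
    (y' : Y)
    (hy' : ∀ U : Set Y, IsOpen U → (U ∩ X).Nonempty →
      ∃ δ, ∀ μ, {n : ℕ | (T ^ n) y' ∈ U} ∈ 𝓐 δ μ) :
    ∀ V : Set Y, IsOpen V → (V ∩ X).Nonempty →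
      ∃ δ : D, ∀ U : Set Y, IsOpen U → (U ∩ X).Nonempty →
        ∃ y ∈ U, ∀ μ : M, {n : ℕ | (T ^ n) y ∈ V} ∈ 𝓐 δ μ :=
  Ahypercyclic_for_subspace_Birkhoff_necessity_general X T 𝓐 hempty hii y' hy'
end

section
/- Let T be a bounded operator on a separable Banach space Y, and X a closed separable subspace of Y invariant under T. Let 𝒜 be an upper Furstenberg family. Suppose: for all x₂ ∈ X, ε₂ > 0 there exist x₂' ∈ X, η₂ > 0 such that for all x₁ ∈ X, ε₁ > 0 there exist x₁' ∈ X, η₁ > 0 so that for all y ∈ Y and finite F ⊆ ℕ, if ‖x₁' − y‖ < η₁ and ‖x₂' − T^n y‖ < η₂ for all n ∈ F, then there exists x ∈ X with ‖x₁ − x‖ < ε₁ and ‖x₂ − T^n x‖ < ε₂ for all n ∈ F. Then T : Y → Y is 𝒜-hypercyclic for X if and only if the restriction T : X → X is 𝒜-hypercyclic. -/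
/-!
Baire category in the complete space `X`. Fix a dense sequence `(u j)` in `X`. For a target ball
`B(u j, 1/(m+1))` the approximation hypothesis provides a ball `B(w, η)` centred in `X`; the
visiting times of the orbit of `y` to it form a set of `𝒜`, so some `δ` has all their shifts in
`⋂_μ 𝒜_{δ,μ}`. For each `μ`, the points of `X` whose visits to the target ball contain a finite set
all of whose supersets lie in `𝒜_{δ,μ}` form an open set. It is dense: follow the orbit of `y` from a
time `s` at which it is close to a given `x₁'`, keep the finitely many shifted visiting times that
the finite determination of `𝒜_{δ,μ}` asks for, and transfer these visits back into `X`. Any point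
of the countable intersection is the required vector.
-/

open Metric

section

variable {Y : Type*} [NormedAddCommGroup Y] [NormedSpace ℝ Y]

/-- The points whose return set to `U` contains a finite set all of whose supersets lie in `𝒜`;
unlike `{x | {n | (T ^ n) x ∈ U} ∈ 𝒜}`, this is an open condition on `x`. -/
def forcedVisitors (T : Y →L[ℝ] Y) (U : Set Y) (𝒜 : Set (Set ℕ)) : Set Y :=
  {x | ∃ G : Finset ℕ, (∀ B : Set ℕ, ↑G ⊆ B → B ∈ 𝒜) ∧ ∀ n ∈ G, (T ^ n) x ∈ U}

theorem isOpen_forcedVisitors (T : Y →L[ℝ] Y) {U : Set Y} (hU : IsOpen U) (𝒜 : Set (Set ℕ)) :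
    IsOpen (forcedVisitors T U 𝒜) :=
  isOpen_iff_mem_nhds.2 fun _ ⟨G, hG, hx⟩ =>
    (G.eventually_all.2 fun n hn =>
      (T ^ n).continuous.continuousAt.preimage_mem_nhds (hU.mem_nhds (hx n hn))).mono
      fun _ hx' => ⟨G, hG, hx'⟩

theorem setOf_pow_apply_mem_mem_of_mem_forcedVisitors {T : Y →L[ℝ] Y} {U V : Set Y}
    {𝒜 : Set (Set ℕ)} {x : Y} (hx : x ∈ forcedVisitors T U 𝒜) (hUV : U ⊆ V) :
    {n : ℕ | (T ^ n) x ∈ V} ∈ 𝒜 :=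
  let ⟨_, hG, hGU⟩ := hx
  hG _ fun n hn => hUV (hGU n hn)

/-- The approximation hypothesis for a target ball `B(z, r)` and a source ball `B(w, η)`. -/
def TransfersVisits (X : Set Y) (T : Y →L[ℝ] Y) (w : Y) (η : ℝ) (z : Y) (r : ℝ) : Prop :=
  ∀ x₁ ∈ X, ∀ ε₁ : ℝ, 0 < ε₁ → ∃ x₁' ∈ X, ∃ η₁ : ℝ, 0 < η₁ ∧
    ∀ y : Y, ∀ F : Finset ℕ,
      (‖x₁' - y‖ < η₁ ∧ ∀ n ∈ F, ‖w - (T ^ n) y‖ < η) →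
      ∃ x ∈ X, ‖x₁ - x‖ < ε₁ ∧ ∀ n ∈ F, ‖z - (T ^ n) x‖ < r

theorem exists_mem_forcedVisitors_near {X : Set Y} {T : Y →L[ℝ] Y} {𝒜 : Set (Set ℕ)}
    {y w z : Y} {η r : ℝ} (htransfer : TransfersVisits X T w η z r)
    (hfin : ∀ A ∈ 𝒜, ∃ F : Finset ℕ, ∀ B : Set ℕ, A ∩ ↑F ⊆ B → B ∈ 𝒜)
    (hshift : ∀ s : ℕ, {k : ℕ | (T ^ (k + s)) y ∈ ball w η} ∈ 𝒜)
    (hnear : ∀ x ∈ X, ∀ ε : ℝ, 0 < ε → ∃ s : ℕ, (T ^ s) y ∈ ball x ε)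
    {x : Y} (hx : x ∈ X) {ε : ℝ} (hε : 0 < ε) :
    ∃ x' ∈ X, ‖x - x'‖ < ε ∧ x' ∈ forcedVisitors T (ball z r) 𝒜 := by
  obtain ⟨x₁', hx₁', η₁, hη₁, hx₁'_transfer⟩ := htransfer x hx ε hε
  obtain ⟨s, hs⟩ := hnear x₁' hx₁' η₁ hη₁
  obtain ⟨F, hF⟩ := hfin _ (hshift s)
  classical
  let G := F.filter fun k => (T ^ (k + s)) y ∈ ball w η
  have hG : ∀ n ∈ G, ‖w - (T ^ n) ((T ^ s) y)‖ < η := fun n hn => by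
    rw [← dist_eq_norm, dist_comm, ← mul_apply_eq_comp, ← pow_add]
    exact (Finset.mem_filter.1 hn).2
  obtain ⟨x', hx', hxx', hx'G⟩ :=
    hx₁'_transfer _ G ⟨by rwa [← dist_eq_norm, dist_comm], hG⟩
  refine ⟨x', hx', hxx', G, fun B hB => hF B fun k ⟨hk, hkF⟩ => hB ?_, fun n hn => ?_⟩
  · exact Finset.mem_filter.2 ⟨hkF, hk⟩
  · rw [mem_ball', dist_eq_norm]
    exact hx'G n hn

theorem exists_pow_apply_mem_ball {D M : Type*} {X : Set Y} {T : Y →L[ℝ] Y}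
    {𝓐 : D → M → Set (Set ℕ)} (hempty : ¬ ∃ δ, ∀ μ, (∅ : Set ℕ) ∈ 𝓐 δ μ) {y : Y}
    (hy : ∀ U : Set Y, IsOpen U → (U ∩ X).Nonempty → ∃ δ, ∀ μ, {n : ℕ | (T ^ n) y ∈ U} ∈ 𝓐 δ μ)
    {x : Y} (hx : x ∈ X) {ε : ℝ} (hε : 0 < ε) : ∃ s : ℕ, (T ^ s) y ∈ ball x ε := by
  by_contra! h
  obtain ⟨δ, hδ⟩ := hy (ball x ε) isOpen_ball ⟨x, mem_ball_self hε, hx⟩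
  exact hempty ⟨δ, fun μ => Set.eq_empty_of_forall_notMem h ▸ hδ μ⟩

end

theorem exists_ball_subset_ball_of_denseRange {α : Type*} [PseudoMetricSpace α] {X : Set α}
    {u : ℕ → X} (hu : DenseRange u) {p : α} (hp : p ∈ X) {r : ℝ} (hr : 0 < r) :
    ∃ j m : ℕ, ball (u j : α) (1 / (m + 1)) ⊆ ball p r := by
  obtain ⟨m, hm⟩ := exists_nat_one_div_lt (half_pos hr)
  obtain ⟨j, hj⟩ := Metric.denseRange_iff.1 hu ⟨p, hp⟩ (r / 2) (half_pos hr)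
  have hj' : dist (u j : α) p < r / 2 := by rw [dist_comm]; exact hj
  exact ⟨j, m, ball_subset_ball' (by linarith)⟩

theorem Ahypercyclic_for_X_iff_Ahypercyclic_in_X_general
    {Y : Type*} [NormedAddCommGroup Y] [NormedSpace ℝ Y] [CompleteSpace Y]
    (X : Subspace ℝ Y) (hX : IsClosed (X : Set Y))
    [TopologicalSpace.SeparableSpace X]
    (T : Y →L[ℝ] Y)
    {D M : Type*} [Countable M]
    (𝓐 : D → M → Set (Set ℕ))
    -- 𝒜 = ∪_δ ∩_μ 𝒜_{δ,μ} is an upper Furstenberg family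
    (hempty : ¬ ∃ δ, ∀ μ, (∅ : Set ℕ) ∈ 𝓐 δ μ)
    (hi : ∀ (δ : D) (μ : M), ∀ A ∈ 𝓐 δ μ, ∃ F : Finset ℕ,
      ∀ B : Set ℕ, A ∩ (F : Set ℕ) ⊆ B → B ∈ 𝓐 δ μ)
    (hii : ∀ A : Set ℕ, (∃ δ, ∀ μ, A ∈ 𝓐 δ μ) →
      ∃ δ, ∀ n : ℕ, ∀ μ, {k : ℕ | k + n ∈ A} ∈ 𝓐 δ μ)
    -- the approximation hypothesis
    (happrox : ∀ x₂ ∈ X, ∀ ε₂ : ℝ, 0 < ε₂ → ∃ x₂' ∈ X, ∃ η₂ : ℝ, 0 < η₂ ∧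
      ∀ x₁ ∈ X, ∀ ε₁ : ℝ, 0 < ε₁ → ∃ x₁' ∈ X, ∃ η₁ : ℝ, 0 < η₁ ∧
        ∀ y : Y, ∀ F : Finset ℕ,
          (‖x₁' - y‖ < η₁ ∧ ∀ n ∈ F, ‖x₂' - (T ^ n) y‖ < η₂) →
          ∃ x ∈ X, ‖x₁ - x‖ < ε₁ ∧ ∀ n ∈ F, ‖x₂ - (T ^ n) x‖ < ε₂) :
    -- T is 𝒜-hypercyclic for X iff T restricted to X is 𝒜-hypercyclic
    ((∃ y : Y, ∀ U : Set Y, IsOpen U → (U ∩ X).Nonempty →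
        ∃ δ, ∀ μ, {n : ℕ | (T ^ n) y ∈ U} ∈ 𝓐 δ μ) ↔
      (∃ x ∈ X, ∀ U : Set Y, IsOpen U → (U ∩ X).Nonempty →
        ∃ δ, ∀ μ, {n : ℕ | (T ^ n) x ∈ U} ∈ 𝓐 δ μ)) := by
  refine ⟨fun ⟨y, hy⟩ => ?_, fun ⟨x, _, hx⟩ => ⟨x, hx⟩⟩
  have : CompleteSpace X := hX.completeSpace_coe
  obtain ⟨u, hu⟩ := TopologicalSpace.exists_dense_seq X
  choose w hwX η hη htransfer using fun j m : ℕ =>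
    happrox (u j) (u j).2 (1 / (m + 1)) Nat.one_div_pos_of_nat
  choose δ hδ using fun j m =>
    hii _ (hy (ball (w j m) (η j m)) isOpen_ball ⟨w j m, mem_ball_self (hη j m), hwX j m⟩)
  let O : ℕ × ℕ × M → Set X := fun ⟨j, m, μ⟩ =>
    (↑) ⁻¹' forcedVisitors T (ball (u j : Y) (1 / (m + 1))) (𝓐 (δ j m) μ)
  have hO_open : ∀ i, IsOpen (O i) := fun ⟨j, m, μ⟩ =>
    (isOpen_forcedVisitors T isOpen_ball _).preimage continuous_subtype_val
  have hO_dense : ∀ i, Dense (O i) := fun ⟨j, m, μ⟩ => Metric.dense_iff.2 fun x ε hε => by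
    obtain ⟨x', hx', hxx', hO⟩ := exists_mem_forcedVisitors_near (htransfer j m) (hi (δ j m) μ)
      (fun s => hδ j m s μ) (fun _ => exists_pow_apply_mem_ball hempty hy) x.2 hε
    exact ⟨⟨x', hx'⟩, by rwa [mem_ball', Subtype.dist_eq, dist_eq_norm], hO⟩
  obtain ⟨x, hx⟩ := (dense_iInter_of_isOpen hO_open hO_dense).nonempty
  refine ⟨x, x.2, fun U hU ⟨p, hpU, hpX⟩ => ?_⟩
  obtain ⟨r, hr, hpr⟩ := Metric.isOpen_iff.1 hU p hpU
  obtain ⟨j, m, hjm⟩ := exists_ball_subset_ball_of_denseRange hu hpX hr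
  exact ⟨δ j m, fun μ => setOf_pow_apply_mem_mem_of_mem_forcedVisitors
    (Set.mem_iInter.1 hx (j, m, μ)) (hjm.trans hpr)⟩

theorem Ahypercyclic_for_X_iff_Ahypercyclic_in_X
    {Y : Type*} [NormedAddCommGroup Y] [NormedSpace ℝ Y] [CompleteSpace Y]
    [TopologicalSpace.SeparableSpace Y]
    (X : Subspace ℝ Y) (hX : IsClosed (X : Set Y))
    [TopologicalSpace.SeparableSpace X]
    (T : Y →L[ℝ] Y) (hinv : ∀ x ∈ X, T x ∈ X)
    {D M : Type*} [Countable M]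
    (𝓐 : D → M → Set (Set ℕ))
    -- 𝒜 = ∪_δ ∩_μ 𝒜_{δ,μ} is an upper Furstenberg family
    (hup : ∀ A B : Set ℕ, (∃ δ, ∀ μ, A ∈ 𝓐 δ μ) → A ⊆ B → (∃ δ, ∀ μ, B ∈ 𝓐 δ μ))
    (hempty : ¬ ∃ δ, ∀ μ, (∅ : Set ℕ) ∈ 𝓐 δ μ)
    (hi : ∀ (δ : D) (μ : M), ∀ A ∈ 𝓐 δ μ, ∃ F : Finset ℕ,
      ∀ B : Set ℕ, A ∩ (F : Set ℕ) ⊆ B → B ∈ 𝓐 δ μ)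
    (hii : ∀ A : Set ℕ, (∃ δ, ∀ μ, A ∈ 𝓐 δ μ) →
      ∃ δ, ∀ n : ℕ, ∀ μ, {k : ℕ | k + n ∈ A} ∈ 𝓐 δ μ)
    -- the approximation hypothesis
    (happrox : ∀ x₂ ∈ X, ∀ ε₂ : ℝ, 0 < ε₂ → ∃ x₂' ∈ X, ∃ η₂ : ℝ, 0 < η₂ ∧
      ∀ x₁ ∈ X, ∀ ε₁ : ℝ, 0 < ε₁ → ∃ x₁' ∈ X, ∃ η₁ : ℝ, 0 < η₁ ∧
        ∀ y : Y, ∀ F : Finset ℕ,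
          (‖x₁' - y‖ < η₁ ∧ ∀ n ∈ F, ‖x₂' - (T ^ n) y‖ < η₂) →
          ∃ x ∈ X, ‖x₁ - x‖ < ε₁ ∧ ∀ n ∈ F, ‖x₂ - (T ^ n) x‖ < ε₂) :
    -- T is 𝒜-hypercyclic for X iff T restricted to X is 𝒜-hypercyclic
    ((∃ y : Y, ∀ U : Set Y, IsOpen U → (U ∩ X).Nonempty →
        ∃ δ, ∀ μ, {n : ℕ | (T ^ n) y ∈ U} ∈ 𝓐 δ μ) ↔
      (∃ x ∈ X, ∀ U : Set Y, IsOpen U → (U ∩ X).Nonempty →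
        ∃ δ, ∀ μ, {n : ℕ | (T ^ n) x ∈ U} ∈ 𝓐 δ μ)) :=
  Ahypercyclic_for_X_iff_Ahypercyclic_in_X_general X hX T 𝓐 hempty hi hii happrox
end

section
/- (Birkhoff-type criterion for upper families) Let T be a bounded operator on a separable Banach space X and 𝒜 = ∪_{δ∈D} ∩_{μ∈M} 𝒜_{δ,μ} an upper Furstenberg family. If for every nonempty open V ⊆ X there is δ ∈ D such that for every nonempty open U ⊆ X and every μ ∈ M there is x ∈ U with {n ≥ 0 : T^n x ∈ V} ∈ 𝒜_{δ,μ}, then T is 𝒜-hypercyclic. -/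
/-!
For each basic open set `V` fix the index `δ_V` given by the hypothesis, and for each `μ` consider
the set `G(V, μ)` of points `x` with `{n | Tⁿ x ∈ V} ∈ 𝓐 δ_V μ`. The hypothesis says exactly that
`G(V, μ)` is dense, and the finite character (i) of `𝓐 δ_V μ` makes it open, because membership
depends only on finitely many points of the orbit, each varying continuously with `x`. With
countably many `V` and `μ`, Baire's theorem yields a point in every `G(V, μ)`; since every nonempty
open set contains a basic one, upward closure of `𝓐` finishes the proof.
-/

open Set TopologicalSpace

section ReturnSets

variable {X N : Type*} [TopologicalSpace X] (g : N → X → X)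

theorem isOpen_setOf_returnSet_mem (hg : ∀ n, Continuous (g n)) {V : Set X} (hV : IsOpen V)
    {𝓕 : Set (Set N)} (h𝓕 : ∀ A ∈ 𝓕, ∃ F : Finset N, ∀ B : Set N, A ∩ (F : Set N) ⊆ B → B ∈ 𝓕) :
    IsOpen {x | {n | g n x ∈ V} ∈ 𝓕} := by
  refine isOpen_iff_mem_nhds.2 fun x hx => ?_
  obtain ⟨F, hF⟩ := h𝓕 _ hx
  have hW : IsOpen (⋂ n ∈ {n | g n x ∈ V} ∩ (F : Set N), g n ⁻¹' V) :=
    (F.finite_toSet.inter_of_right _).isOpen_biInter fun n _ => hV.preimage (hg n)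
  refine Filter.mem_of_superset (hW.mem_nhds (mem_iInter₂.2 fun n hn => hn.1)) fun y hy => ?_
  exact hF _ fun n hn => mem_iInter₂.1 hy n hn

theorem exists_forall_returnSet_mem_of_dense [BaireSpace X] [SecondCountableTopology X]
    [Nonempty X] (hg : ∀ n, Continuous (g n)) {D M : Type*} [Countable M]
    (𝓕 : D → M → Set (Set N))
    (hup : ∀ A B : Set N, (∃ δ, ∀ μ, A ∈ 𝓕 δ μ) → A ⊆ B → ∃ δ, ∀ μ, B ∈ 𝓕 δ μ)
    (hfin : ∀ δ μ, ∀ A ∈ 𝓕 δ μ, ∃ F : Finset N, ∀ B : Set N, A ∩ (F : Set N) ⊆ B → B ∈ 𝓕 δ μ)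
    (hdense : ∀ V : Set X, IsOpen V → V.Nonempty →
      ∃ δ, ∀ U : Set X, IsOpen U → U.Nonempty → ∀ μ, ∃ x ∈ U, {n | g n x ∈ V} ∈ 𝓕 δ μ) :
    ∃ x : X, ∀ U : Set X, IsOpen U → U.Nonempty → ∃ δ, ∀ μ, {n | g n x ∈ U} ∈ 𝓕 δ μ := by
  obtain ⟨𝓑, h𝓑c, -, h𝓑⟩ := exists_countable_basis X
  let Basic := {V : Set X // V ∈ 𝓑 ∧ V.Nonempty}
  have : Countable Basic := (h𝓑c.mono fun _ hV => hV.1).to_subtype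
  choose δ hδ using fun V : Basic => hdense V.1 (h𝓑.isOpen V.2.1) V.2.2
  let G : Basic × M → Set X := fun p => {x | {n | g n x ∈ p.1.1} ∈ 𝓕 (δ p.1) p.2}
  have hG_open (p : Basic × M) : IsOpen (G p) :=
    isOpen_setOf_returnSet_mem g hg (h𝓑.isOpen p.1.2.1) (hfin _ _)
  have hG_dense (p : Basic × M) : Dense (G p) :=
    dense_iff_inter_open.2 fun U hU hUne => hδ p.1 U hU hUne p.2
  obtain ⟨x, hx⟩ := (dense_iInter_of_isOpen hG_open hG_dense).nonempty
  refine ⟨x, fun U hU ⟨z, hzU⟩ => ?_⟩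
  obtain ⟨V, hV𝓑, hzV, hVU⟩ := h𝓑.exists_subset_of_mem_open hzU hU
  exact hup _ _ ⟨δ ⟨V, hV𝓑, z, hzV⟩, fun μ => mem_iInter.1 hx (⟨V, hV𝓑, z, hzV⟩, μ)⟩
    fun n hn => hVU hn

end ReturnSets

theorem Birkhoff_criterion_for_upper_families_general
    {X : Type*} [NormedAddCommGroup X] [NormedSpace ℝ X] [CompleteSpace X]
    [TopologicalSpace.SeparableSpace X]
    (T : X →L[ℝ] X)
    {D M : Type*} [Countable M]
    (𝓐 : D → M → Set (Set ℕ))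
    (hup : ∀ A B : Set ℕ, (∃ δ, ∀ μ, A ∈ 𝓐 δ μ) → A ⊆ B → (∃ δ, ∀ μ, B ∈ 𝓐 δ μ))
    (hi : ∀ (δ : D) (μ : M), ∀ A ∈ 𝓐 δ μ, ∃ F : Finset ℕ,
      ∀ B : Set ℕ, A ∩ (F : Set ℕ) ⊆ B → B ∈ 𝓐 δ μ)
    -- condition (B)
    (hB : ∀ V : Set X, IsOpen V → V.Nonempty →
      ∃ δ : D, ∀ U : Set X, IsOpen U → U.Nonempty → ∀ μ : M,
        ∃ x ∈ U, {n : ℕ | (T ^ n) x ∈ V} ∈ 𝓐 δ μ) :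
    ∃ x : X, ∀ U : Set X, IsOpen U → U.Nonempty →
      ∃ δ, ∀ μ, {n : ℕ | (T ^ n) x ∈ U} ∈ 𝓐 δ μ := by
  have : SecondCountableTopology X := UniformSpace.secondCountable_of_separable X
  exact exists_forall_returnSet_mem_of_dense (fun n => ⇑(T ^ n)) (fun n => (T ^ n).continuous)
    𝓐 hup hi hB

theorem Birkhoff_criterion_for_upper_families
    {X : Type*} [NormedAddCommGroup X] [NormedSpace ℝ X] [CompleteSpace X]
    [TopologicalSpace.SeparableSpace X]
    (T : X →L[ℝ] X)
    {D M : Type*} [Countable M]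
    (𝓐 : D → M → Set (Set ℕ))
    (hup : ∀ A B : Set ℕ, (∃ δ, ∀ μ, A ∈ 𝓐 δ μ) → A ⊆ B → (∃ δ, ∀ μ, B ∈ 𝓐 δ μ))
    (hempty : ¬ ∃ δ, ∀ μ, (∅ : Set ℕ) ∈ 𝓐 δ μ)
    (hi : ∀ (δ : D) (μ : M), ∀ A ∈ 𝓐 δ μ, ∃ F : Finset ℕ,
      ∀ B : Set ℕ, A ∩ (F : Set ℕ) ⊆ B → B ∈ 𝓐 δ μ)
    (hii : ∀ A : Set ℕ, (∃ δ, ∀ μ, A ∈ 𝓐 δ μ) →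
      ∃ δ, ∀ n : ℕ, ∀ μ, {k : ℕ | k + n ∈ A} ∈ 𝓐 δ μ)
    -- condition (B)
    (hB : ∀ V : Set X, IsOpen V → V.Nonempty →
      ∃ δ : D, ∀ U : Set X, IsOpen U → U.Nonempty → ∀ μ : M,
        ∃ x ∈ U, {n : ℕ | (T ^ n) x ∈ V} ∈ 𝓐 δ μ) :
    ∃ x : X, ∀ U : Set X, IsOpen U → U.Nonempty →
      ∃ δ, ∀ μ, {n : ℕ | (T ^ n) x ∈ U} ∈ 𝓐 δ μ :=
  Birkhoff_criterion_for_upper_families_general T 𝓐 hup hi hB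
end

section
/- Let T be a bounded invertible operator on a separable Banach space X. If x is a hypercyclic vector for T, then for every pair of nonempty open sets U, V ⊆ X there exists n ≥ 0 such that T^{-n}(U) ∩ V ≠ ∅; consequently T⁻¹ is topologically transitive. -/
/-!
A point of the dense orbit lies in `V`, say `T^m x`. A nonzero normed space has no isolated
points, so removing the finitely many earlier points leaves the orbit dense; hence some later
point `T^(m+k) x` lies in `U`, and `T^m x` witnesses `T^{-k}(U) ∩ V ≠ ∅`. For the inverse,
`T⁻ⁿ '' U = Tⁿ ⁻¹' U`.
-/

open Filter Function Set Topology

section Orbit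

variable {X : Type*} [TopologicalSpace X] [T1Space X] [∀ x : X, NeBot (𝓝[≠] x)]
  {f : X → X} {x : X}

theorem DenseRange.iterate_tail (hx : DenseRange fun n ↦ f^[n] x) (m : ℕ) :
    DenseRange fun n ↦ f^[n] (f^[m] x) := by
  refine (hx.sdiff_finite ((finite_Iio m).image fun j ↦ f^[j] x)).mono ?_
  rintro _ ⟨⟨n, rfl⟩, hn⟩
  have hmn : m ≤ n := not_lt.mp fun h ↦ hn ⟨n, h, rfl⟩
  exact ⟨n - m, by simp only [← iterate_add_apply, Nat.sub_add_cancel hmn]⟩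

theorem DenseRange.exists_iterate_preimage_inter_nonempty (hx : DenseRange fun n ↦ f^[n] x)
    {U V : Set X} (hU : IsOpen U) (hV : IsOpen V) (hUne : U.Nonempty) (hVne : V.Nonempty) :
    ∃ n, (f^[n] ⁻¹' U ∩ V).Nonempty := by
  obtain ⟨m, hmV⟩ := hx.exists_mem_open hV hVne
  obtain ⟨k, hkU⟩ := (hx.iterate_tail m).exists_mem_open hU hUne
  exact ⟨k, f^[m] x, hkU, hmV⟩

end Orbit

theorem ContinuousLinearEquiv.image_symm_pow_eq_preimage_pow {R M : Type*} [Semiring R]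
    [TopologicalSpace M] [AddCommMonoid M] [Module R M] (e : M ≃L[R] M) (n : ℕ) (s : Set M) :
    ((e.symm : M →L[R] M) ^ n) '' s = ((e : M →L[R] M) ^ n) ⁻¹' s := by
  simp only [FunLike.coe_pow_eq_iterate, coe_coe]
  exact congrFun (image_eq_preimage_of_inverse (LeftInverse.iterate e.apply_symm_apply n)
    (RightInverse.iterate e.symm_apply_apply n)) s

theorem inverse_topologically_transitive_general
    {X : Type*} [NormedAddCommGroup X] [NormedSpace ℝ X]
    (T : X ≃L[ℝ] X) (x : X)
    (hx : Dense (Set.range fun n : ℕ => ((T : X →L[ℝ] X) ^ n) x)) :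
    (∀ U V : Set X, IsOpen U → IsOpen V → U.Nonempty → V.Nonempty →
      ∃ n : ℕ, ((((T : X →L[ℝ] X) ^ n) ⁻¹' U) ∩ V).Nonempty) ∧
    (∀ U V : Set X, IsOpen U → IsOpen V → U.Nonempty → V.Nonempty →
      ∃ n : ℕ, ((((T.symm : X →L[ℝ] X) ^ n) '' U) ∩ V).Nonempty) := by
  have transitive : ∀ U V : Set X, IsOpen U → IsOpen V → U.Nonempty → V.Nonempty →
      ∃ n : ℕ, ((((T : X →L[ℝ] X) ^ n) ⁻¹' U) ∩ V).Nonempty := by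
    intro U V hU hV hUne hVne
    rcases subsingleton_or_nontrivial X with _ | _
    · obtain ⟨v, hv⟩ := hVne
      exact ⟨0, v, (Subsingleton.eq_univ_of_nonempty hUne).symm ▸ mem_univ _, hv⟩
    · simp only [FunLike.coe_pow_eq_iterate] at hx ⊢
      exact DenseRange.exists_iterate_preimage_inter_nonempty hx hU hV hUne hVne
  refine ⟨transitive, fun U V hU hV hUne hVne ↦ ?_⟩
  simpa only [T.image_symm_pow_eq_preimage_pow] using transitive U V hU hV hUne hVne

theorem inverse_topologically_transitive
    {X : Type*} [NormedAddCommGroup X] [NormedSpace ℝ X] [CompleteSpace X]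
    [TopologicalSpace.SeparableSpace X]
    (T : X ≃L[ℝ] X) (x : X)
    (hx : Dense (Set.range fun n : ℕ => ((T : X →L[ℝ] X) ^ n) x)) :
    (∀ U V : Set X, IsOpen U → IsOpen V → U.Nonempty → V.Nonempty →
      ∃ n : ℕ, ((((T : X →L[ℝ] X) ^ n) ⁻¹' U) ∩ V).Nonempty) ∧
    (∀ U V : Set X, IsOpen U → IsOpen V → U.Nonempty → V.Nonempty →
      ∃ n : ℕ, ((((T.symm : X →L[ℝ] X) ^ n) '' U) ∩ V).Nonempty) :=
  inverse_topologically_transitive_general T x hx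
end
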